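/- arXiv:1606.00078 — 5 statements merged into one kernel-verified Lean document; each statement's English description precedes it below -/
import Mathlib

section
/- Let φ : ℝ → (-a, a) be a homeomorphism onto its image with φ(0) = 0, and let h : [0,T] → ℝ be continuous with sup-norm less than a/2. Then there exists a unique real number s in the closed interval [min h, max h] such that ∫₀ᵀ φ⁻¹(h(t) - s) dt = 0. -/
/-!
Write `F s = ∫₀ᵀ φ⁻¹(h t - s) dt`. Being a continuous injection of `(-a, a)` into `ℝ`, `φ⁻¹` is
strictly monotone there (up to a sign, which does not change the zero set of `F`), so `F` is
strictly antitone on `[min h, max h]`. Since `φ⁻¹(0) = 0`, the integrand is nonnegative at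
`s = min h` and nonpositive at `s = max h`; the intermediate value theorem gives a zero, and strict
monotonicity makes it unique.
-/

open Set intervalIntegral

lemma continuousOn_intervalIntegral_of_continuousOn_uncurry {X E : Type*} [TopologicalSpace X]
    [NormedAddCommGroup E] [NormedSpace ℝ E] {K : Set X} {f : X → ℝ → E} {a b : ℝ}
    (hab : a ≤ b) (hf : ContinuousOn f.uncurry (K ×ˢ Icc a b)) :
    ContinuousOn (fun x => ∫ t in a..b, f x t) K := by
  rw [continuousOn_iff_continuous_domRestrict]
  have hcont : Continuous (Function.uncurry fun (x : K) t => f x (projIcc a b hab t)) :=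
    hf.comp_continuous
      (by fun_prop : Continuous fun p : K × ℝ => ((p.1 : X), (projIcc a b hab p.2 : ℝ)))
      fun p => ⟨p.1.2, (projIcc a b hab p.2).2⟩
  refine (continuous_parametric_intervalIntegral_of_continuous' hcont a b).congr fun x =>
    integral_congr fun t ht => ?_
  rw [uIcc_of_le hab] at ht
  simp [projIcc_of_mem hab ht]

section StrictMonoOn

variable {ψ h : ℝ → ℝ} {D S : Set ℝ} {T m M : ℝ}

lemma strictAntiOn_integral_comp_sub (hT : 0 < T) (hψ : ContinuousOn ψ D)
    (hmono : StrictMonoOn ψ D) (hh : ContinuousOn h (Icc 0 T))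
    (hD : ∀ s ∈ S, MapsTo (fun t => h t - s) (Icc 0 T) D) :
    StrictAntiOn (fun s => ∫ t in (0 : ℝ)..T, ψ (h t - s)) S := by
  intro s₁ hs₁ s₂ hs₂ hlt
  have hcont : ∀ s ∈ S, ContinuousOn (fun t => ψ (h t - s)) (Icc 0 T) := fun s hs =>
    hψ.comp (hh.sub continuousOn_const) (hD s hs)
  have hstep : ∀ t ∈ Icc 0 T, ψ (h t - s₂) < ψ (h t - s₁) := fun t ht =>
    hmono (hD s₂ hs₂ ht) (hD s₁ hs₁ ht) (by linarith)
  exact integral_lt_integral_of_continuousOn_of_le_of_exists_lt hT (hcont s₂ hs₂) (hcont s₁ hs₁)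
    (fun t ht => (hstep t (Ioc_subset_Icc_self ht)).le)
    ⟨0, left_mem_Icc.2 hT.le, hstep 0 (left_mem_Icc.2 hT.le)⟩

theorem existsUnique_mem_Icc_integral_comp_sub_eq_zero (hT : 0 < T) (hψ : ContinuousOn ψ D)
    (hmono : StrictMonoOn ψ D) (hψ0 : ψ 0 = 0) (hh : ContinuousOn h (Icc 0 T))
    (hmaps : MapsTo h (Icc 0 T) (Icc m M)) (hD : Icc (m - M) (M - m) ⊆ D) :
    ∃! s, s ∈ Icc m M ∧ ∫ t in (0 : ℝ)..T, ψ (h t - s) = 0 := by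
  have hmM : m ≤ M := nonempty_Icc.1 ⟨h 0, hmaps (left_mem_Icc.2 hT.le)⟩
  have hsub : ∀ s ∈ Icc m M, MapsTo (fun t => h t - s) (Icc 0 T) D := fun s hs t ht =>
    hD ⟨by linarith [(hmaps ht).1, hs.2], by linarith [(hmaps ht).2, hs.1]⟩
  have h0 : (0 : ℝ) ∈ D := hD ⟨by linarith, by linarith⟩
  set F := fun s => ∫ t in (0 : ℝ)..T, ψ (h t - s)
  have hF : StrictAntiOn F (Icc m M) := strictAntiOn_integral_comp_sub hT hψ hmono hh hsub
  have hFc : ContinuousOn F (Icc m M) :=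
    continuousOn_intervalIntegral_of_continuousOn_uncurry (f := fun s t => ψ (h t - s)) hT.le
      (hψ.comp ((hh.comp continuousOn_snd fun p hp => hp.2).sub continuousOn_fst)
        fun p hp => hsub p.1 hp.1 hp.2)
  have hFm : 0 ≤ F m := integral_nonneg hT.le fun t ht => by
    rw [← hψ0]
    exact hmono.monotoneOn h0 (hsub m (left_mem_Icc.2 hmM) ht) (sub_nonneg.2 (hmaps ht).1)
  have hFM : F M ≤ 0 := by
    have hneg : ∀ t ∈ Icc 0 T, 0 ≤ -ψ (h t - M) := fun t ht => by
      rw [neg_nonneg, ← hψ0]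
      exact hmono.monotoneOn (hsub M (right_mem_Icc.2 hmM) ht) h0 (sub_nonpos.2 (hmaps ht).2)
    simpa [F, integral_neg] using integral_nonneg hT.le hneg
  obtain ⟨s, hs, hFs⟩ := intermediate_value_Icc' hmM hFc ⟨hFM, hFm⟩
  exact ⟨s, ⟨hs, hFs⟩, fun s' ⟨hs', hFs'⟩ => hF.injOn hs' hs (hFs'.trans hFs.symm)⟩

end StrictMonoOn

theorem stmt0_general (a T : ℝ) (ha : 0 < a) (hT : 0 < T)
    (φ ψ : ℝ → ℝ)
    (hφ0 : φ 0 = 0)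
    (hψc : ContinuousOn ψ (Set.Ioo (-a) a))
    (hψφ : ∀ y, ψ (φ y) = y) (hφψ : ∀ x ∈ Set.Ioo (-a) a, φ (ψ x) = x)
    (h : ℝ → ℝ) (hh : ContinuousOn h (Set.Icc 0 T))
    (hbound : ∀ t ∈ Set.Icc (0:ℝ) T, |h t| < a / 2) :
    ∃! s : ℝ, s ∈ Set.Icc (sInf (h '' Set.Icc 0 T)) (sSup (h '' Set.Icc 0 T)) ∧
      (∫ t in (0:ℝ)..T, ψ (h t - s)) = 0 := by
  have hψinj : InjOn ψ (Ioo (-a) a) := fun x hx y hy hxy => by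
    rw [← hφψ x hx, ← hφψ y hy, hxy]
  have hψ0 : ψ 0 = 0 := by simpa [hφ0] using hψφ 0
  have himg : IsCompact (h '' Icc 0 T) := isCompact_Icc.image_of_continuousOn hh
  have hne : (h '' Icc 0 T).Nonempty := (nonempty_Icc.2 hT.le).image h
  set m := sInf (h '' Icc 0 T)
  set M := sSup (h '' Icc 0 T)
  have hmaps : MapsTo h (Icc 0 T) (Icc m M) := fun t ht =>
    ⟨csInf_le himg.bddBelow (mem_image_of_mem h ht), le_csSup himg.bddAbove (mem_image_of_mem h ht)⟩
  obtain ⟨tm, htm, hm⟩ := himg.sInf_mem hne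
  obtain ⟨tM, htM, hM⟩ := himg.sSup_mem hne
  have hD : Icc (m - M) (M - m) ⊆ Ioo (-a) a := by
    have := abs_lt.1 (hm ▸ hbound tm htm)
    have := abs_lt.1 (hM ▸ hbound tM htM)
    exact fun x hx => ⟨by linarith [hx.1], by linarith [hx.2]⟩
  rcases hψc.strictMonoOn_of_injOn_Ioo (by linarith) hψinj with hmono | hanti
  · exact existsUnique_mem_Icc_integral_comp_sub_eq_zero hT hψc hmono hψ0 hh hmaps hD
  · simpa [integral_neg] using existsUnique_mem_Icc_integral_comp_sub_eq_zero hT hψc.neg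
      hanti.neg (by simp [hψ0]) hh hmaps hD

theorem stmt0 (a T : ℝ) (ha : 0 < a) (hT : 0 < T)
    (φ ψ : ℝ → ℝ) (hφc : Continuous φ) (hφmem : ∀ y, φ y ∈ Set.Ioo (-a) a)
    (hφ0 : φ 0 = 0)
    (hψc : ContinuousOn ψ (Set.Ioo (-a) a))
    (hψφ : ∀ y, ψ (φ y) = y) (hφψ : ∀ x ∈ Set.Ioo (-a) a, φ (ψ x) = x)
    (h : ℝ → ℝ) (hh : ContinuousOn h (Set.Icc 0 T))
    (hbound : ∀ t ∈ Set.Icc (0:ℝ) T, |h t| < a / 2) :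
    ∃! s : ℝ, s ∈ Set.Icc (sInf (h '' Set.Icc 0 T)) (sSup (h '' Set.Icc 0 T)) ∧
      (∫ t in (0:ℝ)..T, ψ (h t - s)) = 0 :=
  stmt0_general a T ha hT φ ψ hφ0 hψc hψφ hφψ h hh hbound
end

section
/- Let f : [0,T]×ℝ×ℝ → ℝ be continuous, h : [0,T] → [0,∞) continuous, and n ∈ C¹(ℝ,ℝ) with n(0)=0, such that |f(t,x,y)| ≤ f(t,x,y)·n(x) + h(t) for all (t,x,y). Let u : [0,T] → ℝ be C¹ with u(0)=0=u(T), φ∘u' continuously differentiable, and (φ(u'))' = λ f(t,u,u') for some λ ∈ (0,1], where φ is a homeomorphism of ℝ onto (-a,a) with φ(0)=0 and φ(y)·n'(x)·y ≥ 0 for all x,y. Then for all t ∈ [0,T], |∫₀ᵗ f(s,u(s),u'(s)) ds| ≤ ∫₀ᵀ h(s) ds. -/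
/-!
Integrating `(φ(u'))' = λ f(t, u, u')` against `n(u)` and integrating by parts, the boundary term
`φ(u') n(u)` vanishes at `0` and `T` (as `u = 0` there and `n(0) = 0`), while the remaining term
`φ(u') n'(u) u'` is nonnegative by the sign condition. Hence `λ ∫₀ᵀ f n(u) ≤ 0`, so `∫₀ᵀ f n(u) ≤ 0`,
and the growth condition `|f| ≤ f n + h` gives `|∫₀ᵗ f| ≤ ∫₀ᵀ |f| ≤ ∫₀ᵀ h`.
-/

open Set MeasureTheory intervalIntegral

/-- Integration by parts as an inequality: only `p' q` needs to be integrable, since the other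
term `p q'` of `(p q)'` enters only through its sign. -/
lemma integral_deriv_mul_nonpos {p p' q q' : ℝ → ℝ} {a b : ℝ} (hab : a ≤ b)
    (hp : ∀ x ∈ Icc a b, HasDerivWithinAt p (p' x) (Icc a b) x)
    (hq : ∀ x ∈ Icc a b, HasDerivWithinAt q (q' x) (Icc a b) x)
    (hint : IntegrableOn (fun x => p' x * q x) (Icc a b))
    (hpq' : ∀ x ∈ Ioo a b, 0 ≤ p x * q' x) (hqa : q a = 0) (hqb : q b = 0) :
    ∫ x in a..b, p' x * q x ≤ 0 := by
  have hcont : ContinuousOn (fun x => p x * q x) (Icc a b) := fun x hx =>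
    (hp x hx).continuousWithinAt.mul (hq x hx).continuousWithinAt
  have hderiv : ∀ x ∈ Ioo a b,
      HasDerivWithinAt (fun x => p x * q x) (p' x * q x + p x * q' x) (Ioi x) x := fun x hx =>
    (((hp x (Ioo_subset_Icc_self hx)).mul (hq x (Ioo_subset_Icc_self hx))).hasDerivAt
      (Icc_mem_nhds hx.1 hx.2)).hasDerivWithinAt
  simpa [hqa, hqb] using integral_le_sub_of_hasDeriv_right_of_le hab hcont hderiv hint
    fun x hx => le_add_of_nonneg_right (hpq' x hx)

lemma abs_integral_le_integral_of_abs_le_mul_add {F N H : ℝ → ℝ} {a b t : ℝ} (ht : t ∈ Icc a b)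
    (hF : IntervalIntegrable F volume a b)
    (hFN : IntervalIntegrable (fun s => F s * N s) volume a b)
    (hH : IntervalIntegrable H volume a b)
    (hbound : ∀ s ∈ Icc a b, |F s| ≤ F s * N s + H s)
    (hFN_nonpos : ∫ s in a..b, F s * N s ≤ 0) :
    |∫ s in a..t, F s| ≤ ∫ s in a..b, H s :=
  calc |∫ s in a..t, F s|
      ≤ ∫ s in a..t, |F s| := abs_integral_le_integral_abs ht.1
    _ ≤ ∫ s in a..b, |F s| :=
        integral_mono_interval le_rfl ht.1 ht.2 (.of_forall fun _ => abs_nonneg _) hF.abs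
    _ ≤ ∫ s in a..b, (F s * N s + H s) :=
        integral_mono_on (ht.1.trans ht.2) hF.abs (hFN.add hH) hbound
    _ = (∫ s in a..b, F s * N s) + ∫ s in a..b, H s := integral_add hFN hH
    _ ≤ ∫ s in a..b, H s := by linarith

theorem stmt7_general (T : ℝ)
    (φ : ℝ → ℝ)
    (f : ℝ → ℝ → ℝ → ℝ)
    (hf : Continuous fun p : ℝ × ℝ × ℝ => f p.1 p.2.1 p.2.2)
    (h : ℝ → ℝ) (hhc : ContinuousOn h (Set.Icc 0 T))
    (n n' : ℝ → ℝ) (hn : ∀ x, HasDerivAt n (n' x) x)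
    (hn0 : n 0 = 0)
    (hsign : ∀ x y : ℝ, φ y * n' x * y ≥ 0)
    (hgrowth : ∀ t ∈ Set.Icc (0:ℝ) T, ∀ x y : ℝ,
      |f t x y| ≤ f t x y * n x + h t)
    (lam : ℝ) (hlam : 0 < lam ∧ lam ≤ 1)
    (u u' v : ℝ → ℝ)
    (hu : ∀ t ∈ Set.Icc (0:ℝ) T, HasDerivWithinAt u (u' t) (Set.Icc 0 T) t)
    (hu'c : ContinuousOn u' (Set.Icc 0 T))
    (hbc : u 0 = 0 ∧ u T = 0)
    (hv : ∀ t ∈ Set.Icc (0:ℝ) T,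
      HasDerivWithinAt (fun s => φ (u' s)) (v t) (Set.Icc 0 T) t)
    (heq : ∀ t ∈ Set.Icc (0:ℝ) T, v t = lam * f t (u t) (u' t)) :
    ∀ t ∈ Set.Icc (0:ℝ) T,
      |∫ s in (0:ℝ)..t, f s (u s) (u' s)| ≤ ∫ s in (0:ℝ)..T, h s := by
  intro t ht
  have hT : 0 ≤ T := ht.1.trans ht.2
  have hucont : ContinuousOn u (Icc 0 T) := fun s hs => (hu s hs).continuousWithinAt
  have hFcont : ContinuousOn (fun s => f s (u s) (u' s)) (Icc 0 T) :=
    hf.comp_continuousOn (continuousOn_id.prodMk (hucont.prodMk hu'c))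
  have hnu : ∀ s ∈ Icc 0 T, HasDerivWithinAt (fun s => n (u s)) (n' (u s) * u' s) (Icc 0 T) s :=
    fun s hs => (hn (u s)).comp_hasDerivWithinAt s (hu s hs)
  have hnucont : ContinuousOn (fun s => n (u s)) (Icc 0 T) :=
    fun s hs => (hnu s hs).continuousWithinAt
  have hvn : ∫ s in (0:ℝ)..T, v s * n (u s) ≤ 0 :=
    integral_deriv_mul_nonpos hT hv hnu
      (((continuousOn_const.mul hFcont).congr heq).mul hnucont).integrableOn_Icc
      (fun s _ => by simpa only [mul_assoc] using hsign (u s) (u' s))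
      (by simp [hbc.1, hn0]) (by simp [hbc.2, hn0])
  have hFn : ∫ s in (0:ℝ)..T, f s (u s) (u' s) * n (u s) ≤ 0 := by
    have hvn_eq : ∫ s in (0:ℝ)..T, v s * n (u s)
        = lam * ∫ s in (0:ℝ)..T, f s (u s) (u' s) * n (u s) := by
      rw [← intervalIntegral.integral_const_mul]
      refine integral_congr fun s hs => ?_
      rw [uIcc_of_le hT] at hs
      simp only [heq s hs, mul_assoc]
    exact nonpos_of_mul_nonpos_right (hvn_eq ▸ hvn) hlam.1
  exact abs_integral_le_integral_of_abs_le_mul_add ht (hFcont.intervalIntegrable_of_Icc hT)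
    ((hFcont.mul hnucont).intervalIntegrable_of_Icc hT) (hhc.intervalIntegrable_of_Icc hT)
    (fun s hs => hgrowth s hs _ _) hFn

theorem stmt7 (a T : ℝ) (ha : 0 < a) (hT : 0 < T)
    (φ : ℝ → ℝ) (hφc : Continuous φ) (hφinj : Function.Injective φ)
    (hφrange : Set.range φ = Set.Ioo (-a) a) (hφ0 : φ 0 = 0)
    (f : ℝ → ℝ → ℝ → ℝ)
    (hf : Continuous fun p : ℝ × ℝ × ℝ => f p.1 p.2.1 p.2.2)
    (h : ℝ → ℝ) (hhc : ContinuousOn h (Set.Icc 0 T))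
    (hhpos : ∀ t ∈ Set.Icc (0:ℝ) T, 0 ≤ h t)
    (n n' : ℝ → ℝ) (hn : ∀ x, HasDerivAt n (n' x) x) (hn'c : Continuous n')
    (hn0 : n 0 = 0)
    (hsign : ∀ x y : ℝ, φ y * n' x * y ≥ 0)
    (hgrowth : ∀ t ∈ Set.Icc (0:ℝ) T, ∀ x y : ℝ,
      |f t x y| ≤ f t x y * n x + h t)
    (lam : ℝ) (hlam : 0 < lam ∧ lam ≤ 1)
    (u u' v : ℝ → ℝ)
    (hu : ∀ t ∈ Set.Icc (0:ℝ) T, HasDerivWithinAt u (u' t) (Set.Icc 0 T) t)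
    (hu'c : ContinuousOn u' (Set.Icc 0 T))
    (hbc : u 0 = 0 ∧ u T = 0)
    (hv : ∀ t ∈ Set.Icc (0:ℝ) T,
      HasDerivWithinAt (fun s => φ (u' s)) (v t) (Set.Icc 0 T) t)
    (hvc : ContinuousOn v (Set.Icc 0 T))
    (heq : ∀ t ∈ Set.Icc (0:ℝ) T, v t = lam * f t (u t) (u' t)) :
    ∀ t ∈ Set.Icc (0:ℝ) T,
      |∫ s in (0:ℝ)..t, f s (u s) (u' s)| ≤ ∫ s in (0:ℝ)..T, h s :=
  stmt7_general T φ f hf h hhc n n' hn hn0 hsign hgrowth lam hlam u u' v hu hu'c hbc hv heq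
end

section
/- Let φ : (-a,a) → ℝ be a homeomorphism with φ(0)=0, and f : [0,T]×ℝ×ℝ → ℝ continuous. Suppose u ∈ C¹([0,T]) satisfies u = φ⁻¹(-Q_φ(K(N_f u))) + H(φ⁻¹[K(N_f u) − Q_φ(K(N_f u))]), where K(v)(t) = −∫ₜᵀ v(s)ds, H(v)(t) = ∫₀ᵗ v(s)ds, N_f(u)(t) = f(t,u(t),u'(t)), and Q_φ(w) is the unique constant with ∫₀ᵀ φ⁻¹(w(t) − Q_φ(w)) dt = 0. Then u(0) = u(T), u'(T) = u(0), ‖u'‖_∞ < a, φ∘u' is continuously differentiable, and (φ(u'(t)))' = f(t,u(t),u'(t)) for all t ∈ [0,T]. -/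
/-!
Differentiating the fixed-point identity `u = φ⁻¹(-Q) + H(φ⁻¹(K(N_f u) - Q))` shows
`u' = φ⁻¹(K(N_f u) - Q)` on `[0, T]`, so `φ ∘ u' = K(N_f u) - Q` has derivative `N_f u`.
The boundary conditions are read off at the endpoints: `K(N_f u)(T) = 0` gives
`u'(T) = φ⁻¹(-Q) = u(0)`, and the defining property of `Q` makes the integral in `u(T)` vanish.
-/

open intervalIntegral MeasureTheory Set

section IntegralDeriv

variable {g : ℝ → ℝ} {a b t : ℝ}

theorem hasDerivWithinAt_integral_Icc_right (hg : ContinuousOn g (Icc a b)) (ht : t ∈ Icc a b) :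
    HasDerivWithinAt (fun x => ∫ s in a..x, g s) (g t) (Icc a b) t := by
  have : Fact (t ∈ Icc a b) := ⟨ht⟩
  have ha : a ∈ Icc a b := left_mem_Icc.2 (ht.1.trans ht.2)
  exact integral_hasDerivWithinAt_right (hg.mono (uIcc_subset_Icc ha ht)).intervalIntegrable
    (hg.stronglyMeasurableAtFilter_nhdsWithin measurableSet_Icc t) (hg.continuousWithinAt ht)

theorem hasDerivWithinAt_integral_Icc_left (hg : ContinuousOn g (Icc a b)) (ht : t ∈ Icc a b) :
    HasDerivWithinAt (fun x => ∫ s in x..b, g s) (-g t) (Icc a b) t := by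
  have : Fact (t ∈ Icc a b) := ⟨ht⟩
  have hb : b ∈ Icc a b := right_mem_Icc.2 (ht.1.trans ht.2)
  exact integral_hasDerivWithinAt_left (hg.mono (uIcc_subset_Icc ht hb)).intervalIntegrable
    (hg.stronglyMeasurableAtFilter_nhdsWithin measurableSet_Icc t) (hg.continuousWithinAt ht)

theorem eqOn_of_hasDerivWithinAt_of_eq_const_add_integral {u u' : ℝ → ℝ} {c : ℝ} (hab : a < b)
    (hu : ∀ t ∈ Icc a b, HasDerivWithinAt u (u' t) (Icc a b) t) (hg : ContinuousOn g (Icc a b))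
    (hfix : ∀ t ∈ Icc a b, u t = c + ∫ s in a..t, g s) :
    EqOn u' g (Icc a b) := fun t ht =>
  (uniqueDiffOn_Icc hab t ht).eq_deriv _ (hu t ht)
    (((hasDerivWithinAt_integral_Icc_right hg ht).const_add c).congr hfix (hfix t ht))

end IntegralDeriv

theorem stmt10_general (a T : ℝ) (hT : 0 < T)
    (φ ψ : ℝ → ℝ)
    (hψc : Continuous ψ) (hψmem : ∀ y, ψ y ∈ Set.Ioo (-a) a)
    (hφψ : ∀ y, φ (ψ y) = y)
    (f : ℝ → ℝ → ℝ → ℝ)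
    (hf : Continuous fun p : ℝ × ℝ × ℝ => f p.1 p.2.1 p.2.2)
    (u u' : ℝ → ℝ)
    (hu : ∀ t ∈ Set.Icc (0:ℝ) T, HasDerivWithinAt u (u' t) (Set.Icc 0 T) t)
    (hu'c : ContinuousOn u' (Set.Icc 0 T))
    (Qv : ℝ)
    (hQ : (∫ t in (0:ℝ)..T, ψ (-(∫ s in t..T, f s (u s) (u' s)) - Qv)) = 0)
    (hfix : ∀ t ∈ Set.Icc (0:ℝ) T,
      u t = ψ (-Qv) + ∫ s in (0:ℝ)..t, ψ (-(∫ r in s..T, f r (u r) (u' r)) - Qv)) :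
    u 0 = u T ∧ u' T = u 0 ∧ (∀ t ∈ Set.Icc (0:ℝ) T, |u' t| < a) ∧
    ∃ v : ℝ → ℝ, ContinuousOn v (Set.Icc 0 T) ∧
      ∀ t ∈ Set.Icc (0:ℝ) T,
        HasDerivWithinAt (fun s => φ (u' s)) (v t) (Set.Icc 0 T) t ∧
        v t = f t (u t) (u' t) := by
  set N : ℝ → ℝ := fun t => f t (u t) (u' t)
  set K : ℝ → ℝ := fun t => -∫ s in t..T, N s
  have h0 : (0:ℝ) ∈ Icc 0 T := left_mem_Icc.2 hT.le
  have hT' : T ∈ Icc 0 T := right_mem_Icc.2 hT.le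
  have huc : ContinuousOn u (Icc 0 T) := fun t ht => (hu t ht).continuousWithinAt
  have hNc : ContinuousOn N (Icc 0 T) :=
    hf.comp_continuousOn (continuousOn_id.prodMk (huc.prodMk hu'c))
  have hK : ∀ t ∈ Icc 0 T, HasDerivWithinAt K (N t) (Icc 0 T) t := fun t ht =>
    (hasDerivWithinAt_integral_Icc_left hNc ht).neg.congr_deriv (neg_neg _)
  have hKc : ContinuousOn K (Icc 0 T) := fun t ht => (hK t ht).continuousWithinAt
  have hψK : ContinuousOn (fun t => ψ (K t - Qv)) (Icc 0 T) :=
    hψc.comp_continuousOn (hKc.sub continuousOn_const)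
  have hu' : EqOn u' (fun t => ψ (K t - Qv)) (Icc 0 T) :=
    eqOn_of_hasDerivWithinAt_of_eq_const_add_integral hT hu hψK hfix
  have hu0 : u 0 = ψ (-Qv) := by simpa using hfix 0 h0
  have huT : u T = ψ (-Qv) := by rw [hfix T hT', hQ, add_zero]
  have hφu' : EqOn (fun s => φ (u' s)) (fun s => K s - Qv) (Icc 0 T) := fun s hs => by
    simp only [hu' hs, hφψ]
  refine ⟨hu0.trans huT.symm, ?_, fun t ht => ?_, N, hNc, fun t ht => ⟨?_, rfl⟩⟩
  · simp [hu' hT', K, hu0]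
  · rw [hu' ht]
    exact abs_lt.2 (hψmem _)
  · exact ((hK t ht).sub_const Qv).congr hφu' (hφu' ht)

theorem stmt10 (a T : ℝ) (ha : 0 < a) (hT : 0 < T)
    (φ ψ : ℝ → ℝ)
    (hφc : ContinuousOn φ (Set.Ioo (-a) a)) (hφ0 : φ 0 = 0)
    (hψc : Continuous ψ) (hψmem : ∀ y, ψ y ∈ Set.Ioo (-a) a)
    (hφψ : ∀ y, φ (ψ y) = y) (hψφ : ∀ x ∈ Set.Ioo (-a) a, ψ (φ x) = x)
    (f : ℝ → ℝ → ℝ → ℝ)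
    (hf : Continuous fun p : ℝ × ℝ × ℝ => f p.1 p.2.1 p.2.2)
    (u u' : ℝ → ℝ)
    (hu : ∀ t ∈ Set.Icc (0:ℝ) T, HasDerivWithinAt u (u' t) (Set.Icc 0 T) t)
    (hu'c : ContinuousOn u' (Set.Icc 0 T))
    (Qv : ℝ)
    (hQ : (∫ t in (0:ℝ)..T, ψ (-(∫ s in t..T, f s (u s) (u' s)) - Qv)) = 0)
    (hfix : ∀ t ∈ Set.Icc (0:ℝ) T,
      u t = ψ (-Qv) + ∫ s in (0:ℝ)..t, ψ (-(∫ r in s..T, f r (u r) (u' r)) - Qv)) :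
    u 0 = u T ∧ u' T = u 0 ∧ (∀ t ∈ Set.Icc (0:ℝ) T, |u' t| < a) ∧
    ∃ v : ℝ → ℝ, ContinuousOn v (Set.Icc 0 T) ∧
      ∀ t ∈ Set.Icc (0:ℝ) T,
        HasDerivWithinAt (fun s => φ (u' s)) (v t) (Set.Icc 0 T) t ∧
        v t = f t (u t) (u' t) :=
  stmt10_general a T hT φ ψ hψc hψmem hφψ f hf u u' hu hu'c Qv hQ hfix
end

section
/- Let φ : (-a,a) → ℝ be a homeomorphism with φ(0)=0, and f : [0,T]×ℝ×ℝ → ℝ continuous. Suppose u ∈ C¹([0,T]) satisfies ‖u'‖_∞ < a, u(T) = u(0) = u'(T), φ∘u' is continuously differentiable, and (φ(u'))' = f(t,u,u') on [0,T]. Then u is a fixed point of M(u) = φ⁻¹(-Q_φ(K(N_f u))) + H(φ⁻¹[K(N_f u) − Q_φ(K(N_f u))]). -/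
open Set intervalIntegral

theorem stmt11 (a T : ℝ) (ha : 0 < a) (hT : 0 < T)
    (φ ψ : ℝ → ℝ)
    (hφc : ContinuousOn φ (Set.Ioo (-a) a)) (hφ0 : φ 0 = 0)
    (hψc : Continuous ψ) (hψmem : ∀ y, ψ y ∈ Set.Ioo (-a) a)
    (hφψ : ∀ y, φ (ψ y) = y) (hψφ : ∀ x ∈ Set.Ioo (-a) a, ψ (φ x) = x)
    (f : ℝ → ℝ → ℝ → ℝ)
    (hf : Continuous fun p : ℝ × ℝ × ℝ => f p.1 p.2.1 p.2.2)
    (u u' : ℝ → ℝ)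
    (hu : ∀ t ∈ Set.Icc (0:ℝ) T, HasDerivWithinAt u (u' t) (Set.Icc 0 T) t)
    (hu'c : ContinuousOn u' (Set.Icc 0 T))
    (hbd : ∀ t ∈ Set.Icc (0:ℝ) T, |u' t| < a)
    (hbc : u T = u 0 ∧ u 0 = u' T)
    (v : ℝ → ℝ) (hvc : ContinuousOn v (Set.Icc 0 T))
    (hv : ∀ t ∈ Set.Icc (0:ℝ) T,
      HasDerivWithinAt (fun s => φ (u' s)) (v t) (Set.Icc 0 T) t)
    (heq : ∀ t ∈ Set.Icc (0:ℝ) T, v t = f t (u t) (u' t))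
    (Qv : ℝ)
    (hQ : (∫ t in (0:ℝ)..T, ψ (-(∫ s in t..T, f s (u s) (u' s)) - Qv)) = 0) :
    ∀ t ∈ Set.Icc (0:ℝ) T,
      u t = ψ (-Qv) + ∫ s in (0:ℝ)..t, ψ (-(∫ r in s..T, f r (u r) (u' r)) - Qv) := by
  -- general FTC on subintervals of [0,T]
  have ftc : ∀ (F F' : ℝ → ℝ),
      (∀ t ∈ Set.Icc (0:ℝ) T, HasDerivWithinAt F (F' t) (Set.Icc 0 T) t) →
      ContinuousOn F' (Set.Icc 0 T) →
      ∀ t₁ t₂ : ℝ, 0 ≤ t₁ → t₁ ≤ t₂ → t₂ ≤ T →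
      (∫ s in t₁..t₂, F' s) = F t₂ - F t₁ := by
    intro F F' hder hcont t₁ t₂ h0 h12 h2T
    have hsub : Set.Icc t₁ t₂ ⊆ Set.Icc 0 T := Set.Icc_subset_Icc h0 h2T
    refine integral_eq_sub_of_hasDeriv_right_of_le h12
      (fun t ht => ((hder t (hsub ht)).continuousWithinAt).mono hsub) ?_
      ((hcont.mono hsub).intervalIntegrable_of_Icc h12)
    intro x hx
    have hx' : x ∈ Set.Ioo (0:ℝ) T := ⟨lt_of_le_of_lt h0 hx.1, lt_of_lt_of_le hx.2 h2T⟩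
    exact ((hder x (Set.Ioo_subset_Icc_self hx')).hasDerivAt
      (Icc_mem_nhds hx'.1 hx'.2)).hasDerivWithinAt
  set p : ℝ → ℝ := fun s => φ (u' s) with hp
  have hpc : ContinuousOn p (Set.Icc 0 T) := fun t ht => (hv t ht).continuousWithinAt
  -- identity: ∫ s in t..T, f = p T - p t
  have key : ∀ t ∈ Set.Icc (0:ℝ) T, (∫ s in t..T, f s (u s) (u' s)) = p T - p t := by
    intro t ht
    have h1 : (∫ s in t..T, v s) = p T - p t := ftc p v hv hvc t T ht.1 ht.2 le_rfl
    rw [← h1]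
    refine integral_congr fun s hs => ?_
    rw [Set.uIcc_of_le ht.2] at hs
    exact (heq s ⟨le_trans ht.1 hs.1, hs.2⟩).symm
  have hT0 : (0:ℝ) ∈ Set.Icc (0:ℝ) T := ⟨le_rfl, hT.le⟩
  have hTT : T ∈ Set.Icc (0:ℝ) T := ⟨hT.le, le_rfl⟩
  -- u' t = ψ (p t)
  have hup : ∀ t ∈ Set.Icc (0:ℝ) T, u' t = ψ (p t) := by
    intro t ht
    exact (hψφ (u' t) (abs_lt.mp (hbd t ht))).symm
  -- ∫₀ᵀ ψ (p t) = 0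
  have hint0 : (∫ t in (0:ℝ)..T, ψ (p t)) = 0 := by
    have h1 : (∫ t in (0:ℝ)..T, u' t) = u T - u 0 := ftc u u' hu hu'c 0 T le_rfl hT.le le_rfl
    have h2 : (∫ t in (0:ℝ)..T, ψ (p t)) = ∫ t in (0:ℝ)..T, u' t := by
      refine integral_congr fun s hs => ?_
      rw [Set.uIcc_of_le hT.le] at hs
      exact (hup s hs).symm
    rw [h2, h1, hbc.1, sub_self]
  -- hQ rewritten
  have hQ' : (∫ t in (0:ℝ)..T, ψ (p t - (p T + Qv))) = 0 := by
    have hcg : (∫ t in (0:ℝ)..T, ψ (p t - (p T + Qv))) =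
        ∫ t in (0:ℝ)..T, ψ (-(∫ s in t..T, f s (u s) (u' s)) - Qv) := by
      refine integral_congr fun s hs => ?_
      rw [Set.uIcc_of_le hT.le] at hs
      rw [key s hs]; ring_nf
    rw [hcg, hQ]
  -- show p T + Qv = 0
  have hψinj : Function.Injective ψ := fun x y h => by rw [← hφψ x, ← hφψ y, h]
  have hd : p T + Qv = 0 := by
    by_contra hne
    set d := p T + Qv with hdd
    have hcont1 : ContinuousOn (fun t => ψ (p t - d)) (Set.Icc 0 T) :=
      hψc.comp_continuousOn (hpc.sub continuousOn_const)
    have hcont2 : ContinuousOn (fun t => ψ (p t)) (Set.Icc 0 T) :=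
      hψc.comp_continuousOn hpc
    rcases hψc.strictMono_of_inj hψinj with hm | hm <;>
      rcases lt_or_gt_of_ne hne with hdlt | hdlt
    · -- mono, d < 0 : ψ(p t) < ψ(p t - d)
      have : (∫ t in (0:ℝ)..T, ψ (p t)) < ∫ t in (0:ℝ)..T, ψ (p t - d) := by
        refine integral_lt_integral_of_continuousOn_of_le_of_exists_lt hT hcont2 hcont1
          (fun x _ => (hm (by linarith)).le) ⟨0, hT0, hm (by linarith)⟩
      rw [hint0, hQ'] at this; exact lt_irrefl 0 this
    · have : (∫ t in (0:ℝ)..T, ψ (p t - d)) < ∫ t in (0:ℝ)..T, ψ (p t) := by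
        refine integral_lt_integral_of_continuousOn_of_le_of_exists_lt hT hcont1 hcont2
          (fun x _ => (hm (by linarith)).le) ⟨0, hT0, hm (by linarith)⟩
      rw [hint0, hQ'] at this; exact lt_irrefl 0 this
    · have : (∫ t in (0:ℝ)..T, ψ (p t - d)) < ∫ t in (0:ℝ)..T, ψ (p t) := by
        refine integral_lt_integral_of_continuousOn_of_le_of_exists_lt hT hcont1 hcont2
          (fun x _ => (hm (show p x < p x - d by linarith)).le)
          ⟨0, hT0, hm (show p 0 < p 0 - d by linarith)⟩
      rw [hint0, hQ'] at this; exact lt_irrefl 0 this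
    · have : (∫ t in (0:ℝ)..T, ψ (p t)) < ∫ t in (0:ℝ)..T, ψ (p t - d) := by
        refine integral_lt_integral_of_continuousOn_of_le_of_exists_lt hT hcont2 hcont1
          (fun x _ => (hm (show p x - d < p x by linarith)).le)
          ⟨0, hT0, hm (show p 0 - d < p 0 by linarith)⟩
      rw [hint0, hQ'] at this; exact lt_irrefl 0 this
  have hQv : Qv = -p T := by linarith
  -- final
  intro t ht
  have h1 : (∫ s in (0:ℝ)..t, u' s) = u t - u 0 := ftc u u' hu hu'c 0 t le_rfl ht.1 ht.2
  have h2 : (∫ s in (0:ℝ)..t, ψ (-(∫ r in s..T, f r (u r) (u' r)) - Qv)) =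
      ∫ s in (0:ℝ)..t, u' s := by
    refine integral_congr fun s hs => ?_
    rw [Set.uIcc_of_le ht.1] at hs
    have hs' : s ∈ Set.Icc (0:ℝ) T := ⟨hs.1, le_trans hs.2 ht.2⟩
    rw [key s hs', hQv, hup s hs']; ring_nf
  have hu0 : u 0 = ψ (-Qv) := by
    rw [hQv, neg_neg, hbc.2, hup T hTT]
  rw [h2, h1, hu0]; ring
end

section
/- Let φ : ℝ → ℝ be a homeomorphism with φ(0)=0 and f : [0,T]×ℝ×ℝ → ℝ continuous. A function u ∈ C¹([0,T]) with φ∘u' continuously differentiable satisfies (φ(u'))' = f(t,u,u') with u(T) = u'(0) = u'(T) if and only if u = S(u) + Q(N_f u) + K(φ⁻¹[H(N_f u − Q(N_f u)) + φ(S(u))]), where S(u)(t) = u(T), Q(v)(t) = (1/T)∫₀ᵀ v, H(v)(t) = ∫₀ᵗ v, K(v)(t) = −∫ₜᵀ v, N_f(u)(t) = f(t,u(t),u'(t)). -/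
/-!
If `u` solves the problem, integrating `(φ ∘ u')' = N_f u` over `[0, T]` and using
`u'(0) = u'(T)` gives `Q (N_f u) = 0`, and integrating from `0` to `s` with `u'(0) = u(T)` gives
`u' = φ⁻¹[H (N_f u) + φ (u T)]`; integrating once more from `t` to `T` yields the fixed-point
identity. Conversely, differentiating the identity shows
`u' = φ⁻¹[H (N_f u - Q (N_f u)) + φ (u T)]`, so `(φ ∘ u')' = N_f u - Q (N_f u)`. The identity at
`t = T` forces `Q (N_f u) = 0`, the formula for `u'` at `t = 0` gives `u'(0) = u(T)`, and at
`t = T` it gives `u'(T) = u(T)` because `H (N_f u - Q (N_f u))` vanishes at `T`.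
-/

open Set intervalIntegral

section IccCalculus

variable {a b : ℝ} {g g' : ℝ → ℝ}

theorem integral_eq_sub_of_hasDerivWithinAt_Icc
    (hg : ∀ t ∈ Icc a b, HasDerivWithinAt g (g' t) (Icc a b) t)
    (hg' : ContinuousOn g' (Icc a b)) {c d : ℝ} (hc : c ∈ Icc a b) (hd : d ∈ Icc a b) :
    ∫ x in c..d, g' x = g d - g c := by
  have hsub : uIcc c d ⊆ Icc a b := uIcc_subset_Icc hc hd
  refine integral_eq_sub_of_hasDeriv_right
    (fun t ht => (hg t (hsub ht)).continuousWithinAt.mono hsub) (fun x hx => ?_)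
    ((hg'.mono hsub).intervalIntegrable)
  have hx' : x ∈ Ioo a b := Ioo_subset_Ioo (le_min hc.1 hd.1) (max_le hc.2 hd.2) hx
  exact (hg x (Ioo_subset_Icc_self hx')).mono_of_mem_nhdsWithin
    (Icc_mem_nhdsGT_of_mem (Ioo_subset_Ico_self hx'))

theorem hasDerivWithinAt_integral_Icc (hg : ContinuousOn g (Icc a b)) {c t : ℝ}
    (hc : c ∈ Icc a b) (ht : t ∈ Icc a b) :
    HasDerivWithinAt (fun x => ∫ r in c..x, g r) (g t) (Icc a b) t := by
  have : Fact (t ∈ Icc a b) := ⟨ht⟩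
  exact integral_hasDerivWithinAt_right (hg.mono (uIcc_subset_Icc hc ht)).intervalIntegrable
    (hg.stronglyMeasurableAtFilter_nhdsWithin measurableSet_Icc t) (hg t ht)

theorem eqOn_deriv_of_eq_add_neg_integral {u u' : ℝ → ℝ} (hab : a < b)
    (hg : ContinuousOn g (Icc a b))
    (hu : ∀ t ∈ Icc a b, HasDerivWithinAt u (u' t) (Icc a b) t) {C : ℝ}
    (h : ∀ t ∈ Icc a b, u t = C + -∫ s in t..b, g s) : EqOn u' g (Icc a b) := fun t ht => by
  have hsymm : (fun x => C + -∫ s in x..b, g s) = fun x => C + ∫ s in b..x, g s :=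
    funext fun x => by rw [integral_symm, neg_neg]
  have hu_deriv : HasDerivWithinAt u (g t) (Icc a b) t := by
    refine HasDerivWithinAt.congr (f := fun x => C + -∫ s in x..b, g s) ?_ h (h t ht)
    rw [hsymm]
    exact (hasDerivWithinAt_integral_Icc hg (right_mem_Icc.2 hab.le) ht).const_add _
  exact (uniqueDiffOn_Icc hab t ht).eq_deriv _ (hu t ht) hu_deriv

end IccCalculus

/-- `S u + Q F + K (φ⁻¹ [H (F - Q F) + φ (S u)])` at time `t`; the theorem takes
`F = N_f u`. -/
noncomputable def fixedPointMap (T : ℝ) (φ : ℝ ≃ₜ ℝ) (F u : ℝ → ℝ) (t : ℝ) : ℝ :=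
  u T + (1 / T) * (∫ q in (0:ℝ)..T, F q) +
    -(∫ s in t..T, φ.symm
      ((∫ r in (0:ℝ)..s, (F r - (1 / T) * ∫ q in (0:ℝ)..T, F q)) + φ (u T)))

section FixedPoint

variable {T : ℝ} {φ : ℝ ≃ₜ ℝ} {F u u' v : ℝ → ℝ}

theorem eq_fixedPointMap_of_solution (hT : 0 ≤ T)
    (hu : ∀ t ∈ Icc 0 T, HasDerivWithinAt u (u' t) (Icc 0 T) t)
    (hu'c : ContinuousOn u' (Icc 0 T))
    (hv : ∀ t ∈ Icc 0 T, HasDerivWithinAt (fun s => φ (u' s)) (v t) (Icc 0 T) t)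
    (hvc : ContinuousOn v (Icc 0 T)) (hvF : EqOn v F (Icc 0 T))
    (hT0 : u T = u' 0) (h0T : u' 0 = u' T) :
    ∀ t ∈ Icc 0 T, u t = fixedPointMap T φ F u t := by
  intro t ht
  have h0 : (0 : ℝ) ∈ Icc 0 T := left_mem_Icc.2 hT
  have hT' : T ∈ Icc 0 T := right_mem_Icc.2 hT
  have hintF : ∀ s ∈ Icc 0 T, ∫ r in (0:ℝ)..s, F r = φ (u' s) - φ (u' 0) := fun s hs => by
    rw [← integral_congr (hvF.mono (uIcc_subset_Icc h0 hs))]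
    exact integral_eq_sub_of_hasDerivWithinAt_Icc hv hvc h0 hs
  have hmean : ∫ q in (0:ℝ)..T, F q = 0 := by rw [hintF T hT', ← h0T, sub_self]
  have hu'_eq : EqOn
      (fun s => φ.symm ((∫ r in (0:ℝ)..s, (F r - 1 / T * ∫ q in (0:ℝ)..T, F q)) + φ (u T)))
      u' (uIcc t T) := fun s hs => by
    simp only [hmean, mul_zero, sub_zero]
    rw [hintF s (uIcc_subset_Icc ht hT' hs), hT0, sub_add_cancel, φ.symm_apply_apply]
  rw [fixedPointMap, integral_congr hu'_eq, integral_eq_sub_of_hasDerivWithinAt_Icc hu hu'c ht hT',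
    hmean]
  ring

theorem solution_of_eq_fixedPointMap (hT : 0 < T) (hFc : ContinuousOn F (Icc 0 T))
    (hu : ∀ t ∈ Icc 0 T, HasDerivWithinAt u (u' t) (Icc 0 T) t)
    (hv : ∀ t ∈ Icc 0 T, HasDerivWithinAt (fun s => φ (u' s)) (v t) (Icc 0 T) t)
    (h : ∀ t ∈ Icc 0 T, u t = fixedPointMap T φ F u t) :
    EqOn v F (Icc 0 T) ∧ u T = u' 0 ∧ u' 0 = u' T := by
  have h0 : (0 : ℝ) ∈ Icc 0 T := left_mem_Icc.2 hT.le
  have hT' : T ∈ Icc 0 T := right_mem_Icc.2 hT.le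
  set c := 1 / T * ∫ q in (0:ℝ)..T, F q with hc_def
  set H : ℝ → ℝ := fun s => ∫ r in (0:ℝ)..s, (F r - c) with hH_def
  set g : ℝ → ℝ := fun s => φ.symm (H s + φ (u T)) with hg_def
  have hH : ∀ t ∈ Icc 0 T, HasDerivWithinAt H (F t - c) (Icc 0 T) t := fun t ht =>
    hasDerivWithinAt_integral_Icc (hFc.sub continuousOn_const) h0 ht
  have hgc : ContinuousOn g (Icc 0 T) := φ.symm.continuous.comp_continuousOn
    ((HasDerivWithinAt.continuousOn hH).add continuousOn_const)
  have hu' : EqOn u' g (Icc 0 T) := eqOn_deriv_of_eq_add_neg_integral hT hgc hu h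
  have hφu' : EqOn (fun s => φ (u' s)) (fun s => H s + φ (u T)) (Icc 0 T) := fun t ht => by
    simp only [hu' ht, hg_def, φ.apply_symm_apply]
  have hvF : ∀ t ∈ Icc 0 T, v t = F t - c := fun t ht =>
    (uniqueDiffOn_Icc hT t ht).eq_deriv _ (hv t ht)
      (((hH t ht).add_const _).congr hφu' (hφu' ht))
  have hc : c = 0 := by
    have hTT := h T hT'
    rw [fixedPointMap, integral_same] at hTT
    linarith
  have hHT : H T = 0 := by
    simp only [hH_def]
    rw [integral_sub (hFc.intervalIntegrable_of_Icc hT.le) intervalIntegrable_const,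
      integral_const, hc_def, smul_eq_mul]
    field_simp [hT.ne']
    ring
  have hH0 : H 0 = 0 := integral_same
  refine ⟨fun t ht => by rw [hvF t ht, hc, sub_zero], ?_, ?_⟩
  · simp [hu' h0, hg_def, hH0]
  · simp [hu' h0, hu' hT', hg_def, hH0, hHT]

end FixedPoint

theorem stmt13_general (T : ℝ) (hT : 0 < T)
    (φ : ℝ ≃ₜ ℝ)
    (f : ℝ → ℝ → ℝ → ℝ)
    (hf : Continuous fun p : ℝ × ℝ × ℝ => f p.1 p.2.1 p.2.2)
    (u u' v : ℝ → ℝ)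
    (hu : ∀ t ∈ Set.Icc (0:ℝ) T, HasDerivWithinAt u (u' t) (Set.Icc 0 T) t)
    (hu'c : ContinuousOn u' (Set.Icc 0 T))
    (hv : ∀ t ∈ Set.Icc (0:ℝ) T,
      HasDerivWithinAt (fun s => φ (u' s)) (v t) (Set.Icc 0 T) t)
    (hvc : ContinuousOn v (Set.Icc 0 T)) :
    ((∀ t ∈ Set.Icc (0:ℝ) T, v t = f t (u t) (u' t)) ∧
      u T = u' 0 ∧ u' 0 = u' T) ↔
    (∀ t ∈ Set.Icc (0:ℝ) T,
      u t = u T + (1 / T) * (∫ q in (0:ℝ)..T, f q (u q) (u' q)) +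
        -(∫ s in t..T, φ.symm
          ((∫ r in (0:ℝ)..s, (f r (u r) (u' r) -
            (1 / T) * ∫ q in (0:ℝ)..T, f q (u q) (u' q))) + φ (u T)))) := by
  have hFc : ContinuousOn (fun t => f t (u t) (u' t)) (Icc 0 T) :=
    hf.comp_continuousOn
      (continuousOn_id.prodMk ((HasDerivWithinAt.continuousOn hu).prodMk hu'c))
  constructor
  · rintro ⟨hvF, hT0, h0T⟩
    exact eq_fixedPointMap_of_solution hT.le hu hu'c hv hvc hvF hT0 h0T
  · exact solution_of_eq_fixedPointMap hT hFc hu hv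

theorem stmt13 (T : ℝ) (hT : 0 < T)
    (φ : ℝ ≃ₜ ℝ) (hφ0 : φ 0 = 0)
    (f : ℝ → ℝ → ℝ → ℝ)
    (hf : Continuous fun p : ℝ × ℝ × ℝ => f p.1 p.2.1 p.2.2)
    (u u' v : ℝ → ℝ)
    (hu : ∀ t ∈ Set.Icc (0:ℝ) T, HasDerivWithinAt u (u' t) (Set.Icc 0 T) t)
    (hu'c : ContinuousOn u' (Set.Icc 0 T))
    (hv : ∀ t ∈ Set.Icc (0:ℝ) T,
      HasDerivWithinAt (fun s => φ (u' s)) (v t) (Set.Icc 0 T) t)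
    (hvc : ContinuousOn v (Set.Icc 0 T)) :
    ((∀ t ∈ Set.Icc (0:ℝ) T, v t = f t (u t) (u' t)) ∧
      u T = u' 0 ∧ u' 0 = u' T) ↔
    (∀ t ∈ Set.Icc (0:ℝ) T,
      u t = u T + (1 / T) * (∫ q in (0:ℝ)..T, f q (u q) (u' q)) +
        -(∫ s in t..T, φ.symm
          ((∫ r in (0:ℝ)..s, (f r (u r) (u' r) -
            (1 / T) * ∫ q in (0:ℝ)..T, f q (u q) (u' q))) + φ (u T)))) :=
  stmt13_general T hT φ f hf u u' v hu hu'c hv hvc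
end
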